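/- arXiv:2306.02437 — 2 statements merged into one kernel-verified Lean document; each statement's English description precedes it below -/
import Mathlib

section
/- For probability distributions over a finite (or measurable) space, a single step of the KL state-distribution shift is bounded by the previous step's shift plus the action divergence: D_KL(ρ^t_{π_A}, ρ^t_{π_E}) ≤ D_KL(ρ^{t-1}_{π_A}, ρ^{t-1}_{π_E}) + E_{s∼ρ^{t-1}_{π_A}, a∼π_A(·|s)}[log(π_A(a|s)/π_E(a|s))]. -/
open Finset Real

lemma log_sum_ineq {ι : Type*} (t : Finset ι) (a b : ι → ℝ)
    (ha : ∀ i ∈ t, 0 ≤ a i) (hb : ∀ i ∈ t, 0 ≤ b i)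
    (hab : ∀ i ∈ t, 0 < a i → 0 < b i) :
    (∑ i ∈ t, a i) * Real.log ((∑ i ∈ t, a i)/(∑ i ∈ t, b i)) ≤
      ∑ i ∈ t, a i * Real.log (a i / b i) := by
  have hzero : ∀ i ∈ t, b i = 0 → a i = 0 := by
    intro i hi hbi
    by_contra h
    have h1 : 0 < a i := lt_of_le_of_ne (ha i hi) (Ne.symm h)
    have := hab i hi h1
    linarith
  rcases eq_or_lt_of_le (Finset.sum_nonneg hb) with hB | hB
  · have hball : ∀ i ∈ t, b i = 0 := by
      intro i hi
      exact (Finset.sum_eq_zero_iff_of_nonneg hb).1 hB.symm i hi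
    have haall : ∀ i ∈ t, a i = 0 := fun i hi => hzero i hi (hball i hi)
    rw [Finset.sum_eq_zero haall]
    simp only [zero_mul]
    apply Finset.sum_nonneg
    intro i hi
    rw [haall i hi]; simp
  · have hconv := Real.convexOn_mul_log
    have key := hconv.map_centerMass_le (t := t) (w := b) (p := fun i => a i / b i)
      hb hB (fun i hi => Set.mem_Ici.2 (div_nonneg (ha i hi) (hb i hi)))
    have hba : ∀ i ∈ t, b i * (a i / b i) = a i := by
      intro i hi
      rcases eq_or_lt_of_le (hb i hi) with h0 | h0
      · rw [← h0, hzero i hi h0.symm]; simp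
      · field_simp
    have hcm : t.centerMass b (fun i => a i / b i) = (∑ i ∈ t, a i) / (∑ i ∈ t, b i) := by
      rw [Finset.centerMass]
      simp only [smul_eq_mul]
      rw [Finset.sum_congr rfl hba, div_eq_inv_mul]
    rw [hcm] at key
    have key2 : (∑ i ∈ t, a i) / (∑ i ∈ t, b i) *
        Real.log ((∑ i ∈ t, a i) / (∑ i ∈ t, b i)) ≤
        (∑ i ∈ t, b i)⁻¹ * ∑ i ∈ t, a i * Real.log (a i / b i) := by
      refine key.trans_eq ?_
      rw [Finset.centerMass]
      simp only [smul_eq_mul, Function.comp]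
      congr 1
      refine Finset.sum_congr rfl fun i hi => ?_
      rcases eq_or_lt_of_le (hb i hi) with h0 | h0
      · rw [← h0, hzero i hi h0.symm]; simp
      · have : b i * (a i / b i * Real.log (a i / b i)) =
            (b i * (a i / b i)) * Real.log (a i / b i) := by ring
        rw [this, hba i hi]
    have := mul_le_mul_of_nonneg_left key2 hB.le
    calc (∑ i ∈ t, a i) * Real.log ((∑ i ∈ t, a i)/(∑ i ∈ t, b i))
        = (∑ i ∈ t, b i) * ((∑ i ∈ t, a i) / (∑ i ∈ t, b i) *
            Real.log ((∑ i ∈ t, a i) / (∑ i ∈ t, b i))) := by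
          field_simp
      _ ≤ (∑ i ∈ t, b i) * ((∑ i ∈ t, b i)⁻¹ * ∑ i ∈ t, a i * Real.log (a i / b i)) := this
      _ = ∑ i ∈ t, a i * Real.log (a i / b i) := by field_simp

/-- One step of KL state-distribution shift is bounded by the previous
step's shift plus the action divergence. -/
theorem stmt_0 {S A : Type*} [Fintype S] [Fintype A]
    (πA πE : S → A → ℝ) (ρ : S → A → S → ℝ) (μA μE : S → ℝ)
    (hπA_nonneg : ∀ s a, 0 ≤ πA s a) (hπE_nonneg : ∀ s a, 0 ≤ πE s a)
    (hπA_sum : ∀ s, ∑ a, πA s a = 1) (hπE_sum : ∀ s, ∑ a, πE s a = 1)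
    (hρ_nonneg : ∀ s a s', 0 ≤ ρ s a s') (hρ_sum : ∀ s a, ∑ s', ρ s a s' = 1)
    (hμA_nonneg : ∀ s, 0 ≤ μA s) (hμE_nonneg : ∀ s, 0 ≤ μE s)
    (hμA_sum : ∑ s, μA s = 1) (hμE_sum : ∑ s, μE s = 1)
    (hsupp_π : ∀ s a, 0 < πA s a → 0 < πE s a)
    (hsupp_μ : ∀ s, 0 < μA s → 0 < μE s)
    (νA νE : S → ℝ)
    (hνA : ∀ s', νA s' = ∑ s, ∑ a, μA s * πA s a * ρ s a s')
    (hνE : ∀ s', νE s' = ∑ s, ∑ a, μE s * πE s a * ρ s a s') :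
    ∑ s', νA s' * Real.log (νA s' / νE s') ≤
      (∑ s, μA s * Real.log (μA s / μE s)) +
        ∑ s, μA s * ∑ a, πA s a * Real.log (πA s a / πE s a) := by
  classical
  -- Step 1: per-s' log-sum inequality over pairs (s, a)
  have step1 : ∀ s', νA s' * Real.log (νA s' / νE s') ≤
      ∑ p : S × A, (μA p.1 * πA p.1 p.2 * ρ p.1 p.2 s') *
        Real.log ((μA p.1 * πA p.1 p.2 * ρ p.1 p.2 s') /
          (μE p.1 * πE p.1 p.2 * ρ p.1 p.2 s')) := by
    intro s'
    have hA : νA s' = ∑ p : S × A, μA p.1 * πA p.1 p.2 * ρ p.1 p.2 s' := by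
      rw [hνA s']
      exact (Fintype.sum_prod_type
        (fun p : S × A => μA p.1 * πA p.1 p.2 * ρ p.1 p.2 s')).symm
    have hE : νE s' = ∑ p : S × A, μE p.1 * πE p.1 p.2 * ρ p.1 p.2 s' := by
      rw [hνE s']
      exact (Fintype.sum_prod_type
        (fun p : S × A => μE p.1 * πE p.1 p.2 * ρ p.1 p.2 s')).symm
    rw [hA, hE]
    apply log_sum_ineq
    · intro p _
      exact mul_nonneg (mul_nonneg (hμA_nonneg _) (hπA_nonneg _ _)) (hρ_nonneg _ _ _)
    · intro p _
      exact mul_nonneg (mul_nonneg (hμE_nonneg _) (hπE_nonneg _ _)) (hρ_nonneg _ _ _)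
    · intro p _ hpos
      have hfac : ∀ x y : ℝ, 0 ≤ x → 0 ≤ y → 0 < x * y → 0 < x ∧ 0 < y := by
        intro x y hx hy hxy
        refine ⟨lt_of_le_of_ne hx fun h => by simp [← h] at hxy,
          lt_of_le_of_ne hy fun h => by simp [← h] at hxy⟩
      obtain ⟨h12, h3⟩ := hfac _ _
        (mul_nonneg (hμA_nonneg _) (hπA_nonneg _ _)) (hρ_nonneg _ _ _) hpos
      obtain ⟨h1, h2⟩ := hfac _ _ (hμA_nonneg _) (hπA_nonneg _ _) h12
      exact mul_pos (mul_pos (hsupp_μ _ h1) (hsupp_π _ _ h2)) h3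
  -- Step 2: collapse the transition kernel
  have step2 : ∀ p : S × A,
      (∑ s', (μA p.1 * πA p.1 p.2 * ρ p.1 p.2 s') *
        Real.log ((μA p.1 * πA p.1 p.2 * ρ p.1 p.2 s') /
          (μE p.1 * πE p.1 p.2 * ρ p.1 p.2 s'))) =
      (μA p.1 * πA p.1 p.2) *
        Real.log ((μA p.1 * πA p.1 p.2) / (μE p.1 * πE p.1 p.2)) := by
    intro p
    have hterm : ∀ s', (μA p.1 * πA p.1 p.2 * ρ p.1 p.2 s') *
        Real.log ((μA p.1 * πA p.1 p.2 * ρ p.1 p.2 s') /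
          (μE p.1 * πE p.1 p.2 * ρ p.1 p.2 s')) =
        ((μA p.1 * πA p.1 p.2) *
          Real.log ((μA p.1 * πA p.1 p.2) / (μE p.1 * πE p.1 p.2))) * ρ p.1 p.2 s' := by
      intro s'
      rcases eq_or_lt_of_le (hρ_nonneg p.1 p.2 s') with h0 | h0
      · rw [← h0]; ring
      · rw [mul_div_mul_right _ _ (ne_of_gt h0)]; ring
    rw [Finset.sum_congr rfl fun s' _ => hterm s', ← Finset.mul_sum, hρ_sum p.1 p.2, mul_one]
  -- Step 3: decompose the joint KL
  have step3 : ∀ s, (∑ a, (μA s * πA s a) *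
      Real.log ((μA s * πA s a) / (μE s * πE s a))) =
      μA s * Real.log (μA s / μE s) + μA s * ∑ a, πA s a * Real.log (πA s a / πE s a) := by
    intro s
    rcases eq_or_lt_of_le (hμA_nonneg s) with h0 | h0
    · simp [← h0]
    · have hμE : 0 < μE s := hsupp_μ s h0
      have hterm : ∀ a, (μA s * πA s a) *
          Real.log ((μA s * πA s a) / (μE s * πE s a)) =
          μA s * Real.log (μA s / μE s) * πA s a +
            μA s * (πA s a * Real.log (πA s a / πE s a)) := by
        intro a
        rcases eq_or_lt_of_le (hπA_nonneg s a) with hπ0 | hπ0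
        · simp [← hπ0]
        · have hπE : 0 < πE s a := hsupp_π s a hπ0
          have hlog : Real.log ((μA s * πA s a) / (μE s * πE s a)) =
              Real.log (μA s / μE s) + Real.log (πA s a / πE s a) := by
            rw [← Real.log_mul (by positivity) (by positivity), div_mul_div_comm]
          rw [hlog]; ring
      rw [Finset.sum_congr rfl fun a _ => hterm a, Finset.sum_add_distrib,
        ← Finset.mul_sum, hπA_sum s, mul_one, ← Finset.mul_sum]
  calc ∑ s', νA s' * Real.log (νA s' / νE s')
      ≤ ∑ s', ∑ p : S × A, (μA p.1 * πA p.1 p.2 * ρ p.1 p.2 s') *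
          Real.log ((μA p.1 * πA p.1 p.2 * ρ p.1 p.2 s') /
            (μE p.1 * πE p.1 p.2 * ρ p.1 p.2 s')) :=
        Finset.sum_le_sum fun s' _ => step1 s'
    _ = ∑ p : S × A, (μA p.1 * πA p.1 p.2) *
          Real.log ((μA p.1 * πA p.1 p.2) / (μE p.1 * πE p.1 p.2)) := by
        rw [Finset.sum_comm]
        exact Finset.sum_congr rfl fun p _ => step2 p
    _ = ∑ s, ∑ a, (μA s * πA s a) * Real.log ((μA s * πA s a) / (μE s * πE s a)) := by
        exact Fintype.sum_prod_type
          (fun p : S × A => (μA p.1 * πA p.1 p.2) *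
            Real.log ((μA p.1 * πA p.1 p.2) / (μE p.1 * πE p.1 p.2)))
    _ = (∑ s, μA s * Real.log (μA s / μE s)) +
          ∑ s, μA s * ∑ a, πA s a * Real.log (πA s a / πE s a) := by
        rw [Finset.sum_congr rfl fun s _ => step3 s, Finset.sum_add_distrib]
end

section
/- The average-over-time distribution shift satisfies D_KL(ρ_{π_A}, ρ_{π_E}) ≤ (1/H) Σ_{t=0}^{H-1} (H−t) · E_{s∼ρ^t_{π_A}}[D_KL(π_A(·|s), π_E(·|s))], i.e., action divergence at each timestep contributes weighted by time-to-go. -/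
/-!
The state distribution at time `t + 1` is the push-forward, through the transition kernel, of the
joint state–action distribution at time `t`. Data processing and the chain rule for the joint
distribution give
`KL(ρ^{t+1}_A ‖ ρ^{t+1}_E) ≤ KL(ρ^t_A ‖ ρ^t_E) + E_{s ∼ ρ^t_A} KL(π_A(·|s) ‖ π_E(·|s))`,
and telescoping from the common initial distribution bounds `KL(ρ^t_A ‖ ρ^t_E)` by the first `t`
expected action divergences. Joint convexity of KL (the log-sum inequality, which is Jensen's
inequality for `x ↦ x log x`) bounds the divergence of the time averages by the average of the
divergences, and exchanging the sums `∑_{t=1}^H ∑_{k<t}` produces the weights `H - k`.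
-/

open Finset Real

lemma mul_eq_zero_of_mul_eq_zero_of_imp {M₀ : Type*} [MulZeroClass M₀] [NoZeroDivisors M₀]
    {a b c d : M₀} (hac : c = 0 → a = 0) (hbd : d = 0 → b = 0) (h : c * d = 0) : a * b = 0 :=
  (mul_eq_zero.1 h).elim (fun h ↦ by rw [hac h, zero_mul]) fun h ↦ by rw [hbd h, mul_zero]

lemma mul_log_div_sum_le_sum_mul_log_div {ι : Type*} (s : Finset ι) {p q : ι → ℝ}
    (hp : ∀ i ∈ s, 0 ≤ p i) (hq : ∀ i ∈ s, 0 ≤ q i) (hpq : ∀ i ∈ s, q i = 0 → p i = 0) :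
    (∑ i ∈ s, p i) * log ((∑ i ∈ s, p i) / ∑ i ∈ s, q i) ≤ ∑ i ∈ s, p i * log (p i / q i) := by
  set Q := ∑ i ∈ s, q i
  rcases (sum_nonneg hq).eq_or_lt with hQ | hQ
  · have hp0 : ∀ i ∈ s, p i = 0 := fun i hi ↦
      hpq i hi ((sum_eq_zero_iff_of_nonneg hq).1 hQ.symm i hi)
    rw [sum_eq_zero hp0, zero_mul]
    exact (sum_eq_zero fun i hi ↦ by simp [hp0 i hi]).ge
  -- Jensen for `x ↦ x log x` with weights `q i / Q` at the points `p i / q i`.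
  have hweight : ∀ i ∈ s, q i / Q * (p i / q i) = p i / Q := fun i hi ↦ by
    rcases eq_or_ne (q i) 0 with h | h
    · simp [h, hpq i hi h]
    · field_simp
  have hJensen := convexOn_mul_log.map_sum_le (t := s) (w := fun i ↦ q i / Q)
    (p := fun i ↦ p i / q i) (fun i hi ↦ div_nonneg (hq i hi) hQ.le)
    (by rw [← sum_div, div_self hQ.ne']) (fun i hi ↦ div_nonneg (hp i hi) (hq i hi))
  simp only [smul_eq_mul, ← mul_assoc] at hJensen
  have hRHS : ∑ i ∈ s, q i / Q * (p i / q i) * log (p i / q i) =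
      (∑ i ∈ s, p i * log (p i / q i)) / Q := by
    rw [sum_div]
    exact sum_congr rfl fun i hi ↦ by rw [hweight i hi, div_mul_eq_mul_div]
  rwa [hRHS, sum_congr rfl hweight, ← sum_div, div_mul_eq_mul_div,
    div_le_div_iff_of_pos_right hQ] at hJensen

/-- With `log 0 = 0` and `x / 0 = 0`, terms with `q x = 0` vanish even when `p x > 0`; hence the
hypotheses `q x = 0 → p x = 0` throughout. -/
noncomputable def discreteKL {X : Type*} [Fintype X] (p q : X → ℝ) : ℝ := ∑ x, p x * log (p x / q x)

section KL

variable {X Y : Type*} [Fintype X]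

lemma discreteKL_self (p : X → ℝ) : discreteKL p p = 0 :=
  sum_eq_zero fun x _ ↦ by
    rcases eq_or_ne (p x) 0 with h | h <;> simp [h]

lemma discreteKL_smul (c : ℝ) (p q : X → ℝ) : discreteKL (c • p) (c • q) = c * discreteKL p q := by
  rw [discreteKL, discreteKL, mul_sum]
  refine sum_congr rfl fun x _ ↦ ?_
  rcases eq_or_ne c 0 with rfl | hc
  · simp
  · rw [Pi.smul_apply, Pi.smul_apply, smul_eq_mul, smul_eq_mul, mul_div_mul_left _ _ hc, mul_assoc]

lemma discreteKL_sum_le {ι : Type*} (T : Finset ι) {p q : ι → X → ℝ}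
    (hp : ∀ i x, 0 ≤ p i x) (hq : ∀ i x, 0 ≤ q i x) (hpq : ∀ i x, q i x = 0 → p i x = 0) :
    discreteKL (∑ i ∈ T, p i) (∑ i ∈ T, q i) ≤ ∑ i ∈ T, discreteKL (p i) (q i) := by
  calc discreteKL (∑ i ∈ T, p i) (∑ i ∈ T, q i)
      ≤ ∑ x, ∑ i ∈ T, p i x * log (p i x / q i x) := sum_le_sum fun x _ ↦ by
        simpa only [Finset.sum_apply] using mul_log_div_sum_le_sum_mul_log_div T
          (fun i _ ↦ hp i x) (fun i _ ↦ hq i x) fun i _ ↦ hpq i x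
    _ = ∑ i ∈ T, discreteKL (p i) (q i) := sum_comm

lemma discreteKL_vecMul_le [Fintype Y] (κ : Matrix X Y ℝ) (hκ : ∀ x y, 0 ≤ κ x y)
    (hκ1 : ∀ x, ∑ y, κ x y = 1) {p q : X → ℝ} (hp : ∀ x, 0 ≤ p x) (hq : ∀ x, 0 ≤ q x)
    (hpq : ∀ x, q x = 0 → p x = 0) :
    discreteKL (Matrix.vecMul p κ) (Matrix.vecMul q κ) ≤ discreteKL p q := by
  calc discreteKL (Matrix.vecMul p κ) (Matrix.vecMul q κ)
      ≤ ∑ y, ∑ x, p x * κ x y * log (p x * κ x y / (q x * κ x y)) :=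
        sum_le_sum fun y _ ↦ mul_log_div_sum_le_sum_mul_log_div univ
          (fun x _ ↦ mul_nonneg (hp x) (hκ x y)) (fun x _ ↦ mul_nonneg (hq x) (hκ x y))
          fun x _ ↦ mul_eq_zero_of_mul_eq_zero_of_imp (hpq x) id
    _ = ∑ y, ∑ x, p x * log (p x / q x) * κ x y := by
        refine sum_congr rfl fun y _ ↦ sum_congr rfl fun x _ ↦ ?_
        rcases eq_or_ne (κ x y) 0 with h | h
        · simp [h]
        · rw [mul_div_mul_right _ _ h]
          ring
    _ = discreteKL p q := by
        rw [sum_comm]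
        simp only [← mul_sum, hκ1, mul_one, discreteKL]

lemma discreteKL_prod {S A : Type*} [Fintype S] [Fintype A] {μ₁ μ₂ : S → ℝ} {π₁ π₂ : S → A → ℝ}
    (hμ : ∀ s, μ₂ s = 0 → μ₁ s = 0) (hπ : ∀ s a, π₂ s a = 0 → π₁ s a = 0)
    (hπ₁ : ∀ s, ∑ a, π₁ s a = 1) :
    discreteKL (fun x : S × A ↦ μ₁ x.1 * π₁ x.1 x.2) (fun x ↦ μ₂ x.1 * π₂ x.1 x.2) =
      discreteKL μ₁ μ₂ + ∑ s, μ₁ s * discreteKL (π₁ s) (π₂ s) := by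
  have hlog : ∀ s a, μ₁ s * π₁ s a * log (μ₁ s * π₁ s a / (μ₂ s * π₂ s a)) =
      μ₁ s * log (μ₁ s / μ₂ s) * π₁ s a + μ₁ s * (π₁ s a * log (π₁ s a / π₂ s a)) := fun s a ↦ by
    rcases eq_or_ne (μ₁ s) 0 with h₁ | h₁
    · simp [h₁]
    rcases eq_or_ne (π₁ s a) 0 with h₂ | h₂
    · simp [h₂]
    have h₃ : μ₂ s ≠ 0 := mt (hμ s) h₁
    have h₄ : π₂ s a ≠ 0 := mt (hπ s a) h₂
    rw [mul_div_mul_comm, log_mul (div_ne_zero h₁ h₃) (div_ne_zero h₂ h₄)]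
    ring
  simp only [discreteKL, Fintype.sum_prod_type, hlog, sum_add_distrib, ← mul_sum, hπ₁, mul_one]

lemma vecMul_eq_zero_of_vecMul_eq_zero (κ : Matrix X Y ℝ) (hκ : ∀ x y, 0 ≤ κ x y) {p q : X → ℝ}
    (hq : ∀ x, 0 ≤ q x) (hpq : ∀ x, q x = 0 → p x = 0) {y : Y} (h : Matrix.vecMul q κ y = 0) :
    Matrix.vecMul p κ y = 0 := by
  have hterm := (sum_eq_zero_iff_of_nonneg fun x _ ↦ mul_nonneg (hq x) (hκ x y)).1 h
  exact sum_eq_zero fun x hx ↦ mul_eq_zero_of_mul_eq_zero_of_imp (hpq x) id (hterm x hx)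

end KL

lemma sum_Icc_sum_range_eq_sum_range_mul {R : Type*} [CommRing R] (f : ℕ → R) (n : ℕ) :
    ∑ t ∈ Icc 1 n, ∑ k ∈ range t, f k = ∑ k ∈ range n, ((n : R) - k) * f k := by
  induction n with
  | zero => simp
  | succ n ih =>
    rw [sum_Icc_succ_top (by omega), ih, sum_range_succ _ n, Nat.cast_succ]
    simp only [add_sub_right_comm _ (1 : R), add_mul, one_mul, sum_add_distrib, sum_range_succ,
      sub_self, zero_mul, add_zero]

lemma le_add_sum_range_of_succ_le_add {α : Type*} [AddCommMonoid α] [PartialOrder α]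
    [IsOrderedAddMonoid α] {f g : ℕ → α} (h : ∀ k, f (k + 1) ≤ f k + g k) (n : ℕ) :
    f n ≤ f 0 + ∑ k ∈ range n, g k := by
  induction n with
  | zero => simp
  | succ n ih =>
    rw [sum_range_succ, ← add_assoc]
    exact (h n).trans (add_le_add_left ih _)

section StateVisitation

variable {S A : Type*} [Fintype S] [Fintype A] {ρ : S → A → S → ℝ}

/-- The state visitation `ρ^{t+1}_π` as a function of `ρ^t_π`. -/
def nextStateDist (ρ : S → A → S → ℝ) (π₁ : S → A → ℝ) (μ : S → ℝ) : S → ℝ :=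
  fun s' ↦ ∑ s, ∑ a, μ s * π₁ s a * ρ s a s'

lemma nextStateDist_eq_vecMul (π₁ : S → A → ℝ) (μ : S → ℝ) :
    nextStateDist ρ π₁ μ =
      Matrix.vecMul (fun x : S × A ↦ μ x.1 * π₁ x.1 x.2) (fun x ↦ ρ x.1 x.2) := by
  funext s'
  simp only [nextStateDist, Matrix.vecMul, dotProduct, Fintype.sum_prod_type]

lemma nextStateDist_nonneg (hρ : ∀ s a s', 0 ≤ ρ s a s') {π₁ : S → A → ℝ} (hπ : ∀ s a, 0 ≤ π₁ s a)
    {μ : S → ℝ} (hμ : ∀ s, 0 ≤ μ s) (s' : S) : 0 ≤ nextStateDist ρ π₁ μ s' :=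
  sum_nonneg fun s _ ↦ sum_nonneg fun a _ ↦ mul_nonneg (mul_nonneg (hμ s) (hπ s a)) (hρ s a s')

lemma nextStateDist_eq_zero_imp (hρ : ∀ s a s', 0 ≤ ρ s a s') {π₁ π₂ : S → A → ℝ}
    (hπ₂ : ∀ s a, 0 ≤ π₂ s a) (hπ : ∀ s a, π₂ s a = 0 → π₁ s a = 0) {μ₁ μ₂ : S → ℝ}
    (hμ₂ : ∀ s, 0 ≤ μ₂ s) (hμ : ∀ s, μ₂ s = 0 → μ₁ s = 0) {s' : S}
    (h : nextStateDist ρ π₂ μ₂ s' = 0) : nextStateDist ρ π₁ μ₁ s' = 0 := by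
  rw [nextStateDist_eq_vecMul] at h ⊢
  refine vecMul_eq_zero_of_vecMul_eq_zero _ (fun (x : S × A) ↦ hρ x.1 x.2)
    (fun (x : S × A) ↦ mul_nonneg (hμ₂ x.1) (hπ₂ x.1 x.2))
    (fun x ↦ mul_eq_zero_of_mul_eq_zero_of_imp (hμ x.1) (hπ x.1 x.2)) h

lemma discreteKL_nextStateDist_le (hρ : ∀ s a s', 0 ≤ ρ s a s') (hρ1 : ∀ s a, ∑ s', ρ s a s' = 1)
    {π₁ π₂ : S → A → ℝ} (hπ₁ : ∀ s a, 0 ≤ π₁ s a) (hπ₂ : ∀ s a, 0 ≤ π₂ s a)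
    (hπ₁1 : ∀ s, ∑ a, π₁ s a = 1) (hπ : ∀ s a, π₂ s a = 0 → π₁ s a = 0) {μ₁ μ₂ : S → ℝ}
    (hμ₁ : ∀ s, 0 ≤ μ₁ s) (hμ₂ : ∀ s, 0 ≤ μ₂ s) (hμ : ∀ s, μ₂ s = 0 → μ₁ s = 0) :
    discreteKL (nextStateDist ρ π₁ μ₁) (nextStateDist ρ π₂ μ₂) ≤
      discreteKL μ₁ μ₂ + ∑ s, μ₁ s * discreteKL (π₁ s) (π₂ s) := by
  rw [nextStateDist_eq_vecMul, nextStateDist_eq_vecMul, ← discreteKL_prod hμ hπ hπ₁1]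
  exact discreteKL_vecMul_le _ (fun (x : S × A) ↦ hρ x.1 x.2) (fun x ↦ hρ1 x.1 x.2)
    (fun x ↦ mul_nonneg (hμ₁ x.1) (hπ₁ x.1 x.2)) (fun x ↦ mul_nonneg (hμ₂ x.1) (hπ₂ x.1 x.2))
    fun x ↦ mul_eq_zero_of_mul_eq_zero_of_imp (hμ x.1) (hπ x.1 x.2)

lemma visitation_nonneg (hρ : ∀ s a s', 0 ≤ ρ s a s') {π₁ : S → A → ℝ} (hπ : ∀ s a, 0 ≤ π₁ s a)
    {μ : ℕ → S → ℝ} (h0 : ∀ s, 0 ≤ μ 0 s) (hrec : ∀ t, μ (t + 1) = nextStateDist ρ π₁ (μ t)) :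
    ∀ t s, 0 ≤ μ t s := by
  intro t
  induction t with
  | zero => exact h0
  | succ t ih => rw [hrec]; exact nextStateDist_nonneg hρ hπ ih

lemma visitation_eq_zero_imp (hρ : ∀ s a s', 0 ≤ ρ s a s') {π₁ π₂ : S → A → ℝ}
    (hπ₂ : ∀ s a, 0 ≤ π₂ s a) (hπ : ∀ s a, π₂ s a = 0 → π₁ s a = 0) {μ₁ μ₂ : ℕ → S → ℝ}
    (h0 : ∀ s, 0 ≤ μ₂ 0 s) (hinit : μ₁ 0 = μ₂ 0)
    (hrec₁ : ∀ t, μ₁ (t + 1) = nextStateDist ρ π₁ (μ₁ t))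
    (hrec₂ : ∀ t, μ₂ (t + 1) = nextStateDist ρ π₂ (μ₂ t)) :
    ∀ t s, μ₂ t s = 0 → μ₁ t s = 0 := by
  intro t
  induction t with
  | zero => rw [hinit]; exact fun _ ↦ id
  | succ t ih =>
    rw [hrec₁, hrec₂]
    exact fun s ↦ nextStateDist_eq_zero_imp hρ hπ₂ hπ (visitation_nonneg hρ hπ₂ h0 hrec₂ t) ih

lemma discreteKL_visitation_le (hρ : ∀ s a s', 0 ≤ ρ s a s') (hρ1 : ∀ s a, ∑ s', ρ s a s' = 1)
    {π₁ π₂ : S → A → ℝ} (hπ₁ : ∀ s a, 0 ≤ π₁ s a) (hπ₂ : ∀ s a, 0 ≤ π₂ s a)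
    (hπ₁1 : ∀ s, ∑ a, π₁ s a = 1) (hπ : ∀ s a, π₂ s a = 0 → π₁ s a = 0) {μ₁ μ₂ : ℕ → S → ℝ}
    (h0 : ∀ s, 0 ≤ μ₁ 0 s) (hinit : μ₁ 0 = μ₂ 0)
    (hrec₁ : ∀ t, μ₁ (t + 1) = nextStateDist ρ π₁ (μ₁ t))
    (hrec₂ : ∀ t, μ₂ (t + 1) = nextStateDist ρ π₂ (μ₂ t)) (t : ℕ) :
    discreteKL (μ₁ t) (μ₂ t) ≤ ∑ k ∈ range t, ∑ s, μ₁ k s * discreteKL (π₁ s) (π₂ s) := by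
  have h0₂ : ∀ s, 0 ≤ μ₂ 0 s := hinit ▸ h0
  have hstep : ∀ t, discreteKL (μ₁ (t + 1)) (μ₂ (t + 1)) ≤
      discreteKL (μ₁ t) (μ₂ t) + ∑ s, μ₁ t s * discreteKL (π₁ s) (π₂ s) := fun t ↦ by
    rw [hrec₁, hrec₂]
    exact discreteKL_nextStateDist_le hρ hρ1 hπ₁ hπ₂ hπ₁1 hπ
      (visitation_nonneg hρ hπ₁ h0 hrec₁ t) (visitation_nonneg hρ hπ₂ h0₂ hrec₂ t)
      (visitation_eq_zero_imp hρ hπ₂ hπ h0₂ hinit hrec₁ hrec₂ t)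
  simpa [hinit, discreteKL_self] using
    le_add_sum_range_of_succ_le_add (f := fun t ↦ discreteKL (μ₁ t) (μ₂ t)) hstep t

end StateVisitation

theorem stmt_2_general {S A : Type*} [Fintype S] [Fintype A]
    (πA πE : S → A → ℝ) (ρ : S → A → S → ℝ) (ρA ρE : ℕ → S → ℝ) (H : ℕ)
    (hπA_nonneg : ∀ s a, 0 ≤ πA s a) (hπE_nonneg : ∀ s a, 0 ≤ πE s a)
    (hπA_sum : ∀ s, ∑ a, πA s a = 1)
    (hρ_nonneg : ∀ s a s', 0 ≤ ρ s a s') (hρ_sum : ∀ s a, ∑ s', ρ s a s' = 1)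
    (h0_nonneg : ∀ s, 0 ≤ ρA 0 s)
    (hinit : ρA 0 = ρE 0)
    (hA_rec : ∀ t s', ρA (t + 1) s' = ∑ s, ∑ a, ρA t s * πA s a * ρ s a s')
    (hE_rec : ∀ t s', ρE (t + 1) s' = ∑ s, ∑ a, ρE t s * πE s a * ρ s a s')
    (hsupp_π : ∀ s a, 0 < πA s a → 0 < πE s a)
    (ρbarA ρbarE : S → ℝ)
    (hbarA : ∀ s, ρbarA s = (1 / (H : ℝ)) * ∑ t ∈ Finset.Icc 1 H, ρA t s)
    (hbarE : ∀ s, ρbarE s = (1 / (H : ℝ)) * ∑ t ∈ Finset.Icc 1 H, ρE t s) :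
    ∑ s, ρbarA s * Real.log (ρbarA s / ρbarE s) ≤
      (1 / (H : ℝ)) * ∑ t ∈ Finset.range H,
        ((H : ℝ) - t) * ∑ s, ρA t s * ∑ a, πA s a * Real.log (πA s a / πE s a) := by
  have hA : ∀ t, ρA (t + 1) = nextStateDist ρ πA (ρA t) := fun t ↦ funext (hA_rec t)
  have hE : ∀ t, ρE (t + 1) = nextStateDist ρ πE (ρE t) := fun t ↦ funext (hE_rec t)
  have hπ : ∀ s a, πE s a = 0 → πA s a = 0 := fun s a h ↦
    (hπA_nonneg s a).eq_or_lt.elim Eq.symm fun hpos ↦ absurd h (hsupp_π s a hpos).ne'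
  have hbarA' : ρbarA = (1 / (H : ℝ)) • ∑ t ∈ Icc 1 H, ρA t := by
    ext s; simp [hbarA, Finset.sum_apply]
  have hbarE' : ρbarE = (1 / (H : ℝ)) • ∑ t ∈ Icc 1 H, ρE t := by
    ext s; simp [hbarE, Finset.sum_apply]
  have h0E : ∀ s, 0 ≤ ρE 0 s := hinit ▸ h0_nonneg
  calc discreteKL ρbarA ρbarE
      = 1 / H * discreteKL (∑ t ∈ Icc 1 H, ρA t) (∑ t ∈ Icc 1 H, ρE t) := by
        rw [hbarA', hbarE', discreteKL_smul]
    _ ≤ 1 / H * ∑ t ∈ Icc 1 H, discreteKL (ρA t) (ρE t) := by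
        gcongr
        exact discreteKL_sum_le _ (visitation_nonneg hρ_nonneg hπA_nonneg h0_nonneg hA)
          (visitation_nonneg hρ_nonneg hπE_nonneg h0E hE)
          (visitation_eq_zero_imp hρ_nonneg hπE_nonneg hπ h0E hinit hA hE)
    _ ≤ 1 / H * ∑ t ∈ Icc 1 H, ∑ k ∈ range t, ∑ s, ρA k s * discreteKL (πA s) (πE s) := by
        gcongr with t
        exact discreteKL_visitation_le hρ_nonneg hρ_sum hπA_nonneg hπE_nonneg hπA_sum hπ
          h0_nonneg hinit hA hE t
    _ = _ := by rw [sum_Icc_sum_range_eq_sum_range_mul]; rfl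

/-- Time-averaged distribution shift is bounded by the per-step action
divergence weighted by time-to-go:
`D_KL(ρ_{π_A}, ρ_{π_E}) ≤ (1/H) ∑_{t=0}^{H-1} (H-t) E_{s ∼ ρ^t_{π_A}}[D_KL(π_A(·|s), π_E(·|s))]`. -/
theorem stmt_2 {S A : Type*} [Fintype S] [Fintype A]
    (πA πE : S → A → ℝ) (ρ : S → A → S → ℝ) (ρA ρE : ℕ → S → ℝ) (H : ℕ) (hH : 0 < H)
    (hπA_nonneg : ∀ s a, 0 ≤ πA s a) (hπE_nonneg : ∀ s a, 0 ≤ πE s a)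
    (hπA_sum : ∀ s, ∑ a, πA s a = 1) (hπE_sum : ∀ s, ∑ a, πE s a = 1)
    (hρ_nonneg : ∀ s a s', 0 ≤ ρ s a s') (hρ_sum : ∀ s a, ∑ s', ρ s a s' = 1)
    (h0_nonneg : ∀ s, 0 ≤ ρA 0 s) (h0_sum : ∑ s, ρA 0 s = 1)
    (hinit : ρA 0 = ρE 0)
    (hA_rec : ∀ t s', ρA (t + 1) s' = ∑ s, ∑ a, ρA t s * πA s a * ρ s a s')
    (hE_rec : ∀ t s', ρE (t + 1) s' = ∑ s, ∑ a, ρE t s * πE s a * ρ s a s')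
    (hsupp_π : ∀ s a, 0 < πA s a → 0 < πE s a)
    (ρbarA ρbarE : S → ℝ)
    (hbarA : ∀ s, ρbarA s = (1 / (H : ℝ)) * ∑ t ∈ Finset.Icc 1 H, ρA t s)
    (hbarE : ∀ s, ρbarE s = (1 / (H : ℝ)) * ∑ t ∈ Finset.Icc 1 H, ρE t s) :
    ∑ s, ρbarA s * Real.log (ρbarA s / ρbarE s) ≤
      (1 / (H : ℝ)) * ∑ t ∈ Finset.range H,
        ((H : ℝ) - t) * ∑ s, ρA t s * ∑ a, πA s a * Real.log (πA s a / πE s a) :=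
  stmt_2_general πA πE ρ ρA ρE H hπA_nonneg hπE_nonneg hπA_sum hρ_nonneg hρ_sum h0_nonneg hinit
    hA_rec hE_rec hsupp_π ρbarA ρbarE hbarA hbarE
end
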